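/- In the basic-lift setup, let S = {i_1,...,i_k} ⊆ {1,...,n} be a σ-class of the lift f̄ of the n-valued map f: X → D_n(X). Then the formula g(x) = {p(f̄_{i_1}(x̃)), ..., p(f̄_{i_k}(x̃))}, where x̃ is any point of p^{-1}(x), is independent of the choice of x̃ and defines a continuous k-valued map g: X → D_k(X) which is a submap of f and which lifts to (f̄_{i_1},...,f̄_{i_k}). -/

import Mathlib

/-
The points `p (f̄ᵢ x̃)`, `i ∈ S`, form a continuous `k`-valued map on `X̃`. Moving `x̃` to `α • x̃`
permutes them by `σ_α⁻¹`, which preserves the σ-class `S`, so this configuration only depends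
on `p x̃`; as `X` is connected, the covering `p` is surjective, hence a quotient map, and the map
descends to `X`.
-/

open Function Set

/-- The ordered configuration space of `n` points in `Y`. -/
def OrdConf (n : ℕ) (Y : Type*) [TopologicalSpace Y] : Type _ :=
  {y : Fin n → Y // Function.Injective y}

instance (n : ℕ) (Y : Type*) [TopologicalSpace Y] : TopologicalSpace (OrdConf n Y) :=
  instTopologicalSpaceSubtype

/-- Two ordered configurations are equivalent when they differ by a permutation. -/
def confSetoid (n : ℕ) (Y : Type*) [TopologicalSpace Y] : Setoid (OrdConf n Y) where
  r a b := ∃ σ : Equiv.Perm (Fin n), a.1 ∘ σ = b.1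
  iseqv := by
    constructor
    · intro a; exact ⟨Equiv.refl _, rfl⟩
    · rintro a b ⟨σ, h⟩
      refine ⟨σ.symm, funext fun i => ?_⟩
      have := congrFun h (σ.symm i)
      simpa using this.symm
    · rintro a b c ⟨σ, h1⟩ ⟨τ, h2⟩
      refine ⟨τ.trans σ, funext fun i => ?_⟩
      have h1' := congrFun h1 (τ i)
      have h2' := congrFun h2 i
      simp only [Function.comp_apply] at h1' h2' ⊢
      simp [Equiv.trans_apply, h1', h2']

/-- The unordered configuration space `D_n(Y)` of `n` points in `Y`,
with the quotient topology. -/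
def UnordConf (n : ℕ) (Y : Type*) [TopologicalSpace Y] : Type _ :=
  Quotient (confSetoid n Y)

instance (n : ℕ) (Y : Type*) [TopologicalSpace Y] : TopologicalSpace (UnordConf n Y) :=
  instTopologicalSpaceQuotient

/-- The underlying `n`-element subset of `Y` determined by an unordered configuration. -/
def UnordConf.values {n : ℕ} {Y : Type*} [TopologicalSpace Y] : UnordConf n Y → Set Y :=
  Quotient.lift (fun a => Set.range a.1) (by
    rintro a b ⟨σ, h⟩
    show Set.range a.1 = Set.range b.1
    rw [← h, Set.range_comp]
    simp)

/-- An `n`-valued map from `X` to `Y` is a continuous map `X → D_n(Y)`. -/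
abbrev NValuedMap (X Y : Type*) [TopologicalSpace X] [TopologicalSpace Y] (n : ℕ) :=
  C(X, UnordConf n Y)

/-- `g` is a submap of `f` when `g(x) ⊆ f(x)` for all `x`. -/
def IsSubmap {X Y : Type*} [TopologicalSpace X] [TopologicalSpace Y] {k n : ℕ}
    (g : NValuedMap X Y k) (f : NValuedMap X Y n) : Prop :=
  ∀ x : X, (g x).values ⊆ (f x).values

/-- An `n`-valued map is irreducible when it admits no proper (`k`-valued, `0 < k < n`) submap. -/
def IsIrreducibleNV {X Y : Type*} [TopologicalSpace X] [TopologicalSpace Y] {n : ℕ}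
    (f : NValuedMap X Y n) : Prop :=
  ¬ ∃ (k : ℕ) (g : NValuedMap X Y k), 0 < k ∧ k < n ∧ IsSubmap g f

/-- A partition of an `n`-valued map `f` into `l` multimaps:
a family of `kᵢ`-valued maps with `k₁ + ⋯ + k_l = n` whose values unite to those of `f`. -/
structure NVPartition {X Y : Type*} [TopologicalSpace X] [TopologicalSpace Y] {n : ℕ}
    (f : NValuedMap X Y n) (l : ℕ) where
  card : Fin l → ℕ
  card_pos : ∀ i, 0 < card i
  maps : ∀ i, NValuedMap X Y (card i)
  sum_card : ∑ i, card i = n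
  values_eq : ∀ x : X, (f x).values = ⋃ i, UnordConf.values ((maps i) x)

/-- A partition is into irreducibles when every member is irreducible. -/
def NVPartition.IsIrreduciblePartition {X Y : Type*} [TopologicalSpace X] [TopologicalSpace Y]
    {n : ℕ} {f : NValuedMap X Y n} {l : ℕ} (P : NVPartition f l) : Prop :=
  ∀ i, IsIrreducibleNV (P.maps i)

/-- A space is a (compact) finite polyhedron when it is homeomorphic to the underlying
space of a finite simplicial complex in some Euclidean space. -/
def IsFinitePolyhedron (X : Type*) [TopologicalSpace X] : Prop :=
  ∃ (N : ℕ) (K : Geometry.SimplicialComplex ℝ (EuclideanSpace ℝ (Fin N))),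
    K.faces.Finite ∧ Nonempty (X ≃ₜ K.space)

/-- The universal-covering setup: `p : X̃ → X` is a universal covering with deck
transformation group `π` acting freely and transitively on fibers. -/
structure DeckSetup (π : Type*) [Group π] (Xt X : Type*) [TopologicalSpace Xt]
    [TopologicalSpace X] [MulAction π Xt] (p : Xt → X) : Prop where
  continuous_p : Continuous p
  covering : IsCoveringMap p
  simplyConnected : SimplyConnectedSpace Xt
  continuous_smul : ∀ γ : π, Continuous fun x : Xt => γ • x
  p_smul : ∀ (γ : π) (x : Xt), p (γ • x) = p x
  exists_deck : ∀ x y : Xt, p x = p y → ∃ γ : π, γ • x = y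
  free : ∀ (γ : π) (x : Xt), γ • x = x → γ = 1

/-- A lift `f̄ = (f̄_1,…,f̄_n) : X̃ → F_n(X̃,π)` of an `n`-valued selfmap `f` of `X`,
together with its associated data `φ_1,…,φ_n : π → π` and homomorphism
`σ : π → Σ_n` satisfying `f̄_i(α·x̃) = φ_i(α)·f̄_{σ_α⁻¹(i)}(x̃)`. -/
structure NVLift {π Xt X : Type*} [Group π] [TopologicalSpace Xt] [TopologicalSpace X]
    [MulAction π Xt] (p : Xt → X) {n : ℕ} (f : NValuedMap X X n) where
  fbar : Fin n → Xt → Xt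
  continuous_fbar : ∀ i, Continuous (fbar i)
  inj : ∀ x : Xt, Function.Injective fun i => p (fbar i x)
  lifts : ∀ x : Xt, UnordConf.values (f (p x)) = Set.range fun i => p (fbar i x)
  phi : Fin n → π → π
  sigma : π →* Equiv.Perm (Fin n)
  equivar : ∀ (α : π) (x : Xt) (i : Fin n),
    fbar i (α • x) = phi i α • fbar ((sigma α)⁻¹ i) x

/-- `S` is a σ-class: an equivalence class of the relation `i ∼ j ↔ ∃ γ, σ_γ(j) = i`. -/
def IsSigmaClass {π : Type*} [Group π] {n : ℕ} (σ : π →* Equiv.Perm (Fin n))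
    (S : Set (Fin n)) : Prop :=
  ∃ j : Fin n, S = {i | ∃ γ : π, σ γ j = i}

theorem IsCoveringMap.isClosed_range {E B : Type*} [TopologicalSpace E] [TopologicalSpace B]
    {p : E → B} (hp : IsCoveringMap p) : IsClosed (range p) := by
  rw [← isOpen_compl_iff, isOpen_iff_mem_nhds]
  intro b hb
  obtain ⟨-, U, hbU, hU, -, H, -⟩ := hp b
  -- the fibre over `b` is empty, hence so is the evenly covered preimage of `U`
  refine Filter.mem_of_superset (hU.mem_nhds hbU) ?_
  rintro _ hy ⟨e, rfl⟩
  exact hb ⟨_, (H ⟨e, hy⟩).2.2⟩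

theorem IsCoveringMap.surjective {E B : Type*} [TopologicalSpace E] [TopologicalSpace B]
    [Nonempty E] [ConnectedSpace B] {p : E → B} (hp : IsCoveringMap p) : Surjective p :=
  range_eq_univ.mp <| IsClopen.eq_univ ⟨hp.isClosed_range, hp.isOpenMap.isOpen_range⟩
    (range_nonempty p)

namespace UnordConf

variable {Y : Type*} [TopologicalSpace Y]

theorem values_injective {n : ℕ} : Injective (values : UnordConf n Y → Set Y) := by
  refine fun c d => Quotient.inductionOn₂ c d fun a b (h : range a.1 = range b.1) => ?_
  refine Quotient.sound ⟨(Equiv.ofInjective b.1 b.2).trans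
    ((Equiv.setCongr h.symm).trans (Equiv.ofInjective a.1 a.2).symm), funext fun i => ?_⟩
  simp only [comp_apply, Equiv.trans_apply, Equiv.apply_ofInjective_symm]
  rfl

noncomputable def ofFinset {ι : Type*} (S : Finset ι) (y : ι → Y) (hy : InjOn y S) :
    UnordConf S.card Y :=
  Quotient.mk _ ⟨fun i => y (S.equivFin.symm i), fun _ _ h =>
    S.equivFin.symm.injective (Subtype.ext (hy (S.equivFin.symm _).2 (S.equivFin.symm _).2 h))⟩

theorem values_ofFinset {ι : Type*} (S : Finset ι) (y : ι → Y) (hy : InjOn y S) :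
    (ofFinset S y hy).values = y '' S := by
  ext z
  constructor
  · rintro ⟨i, rfl⟩
    exact ⟨_, (S.equivFin.symm i).2, rfl⟩
  · rintro ⟨j, hj, rfl⟩
    exact ⟨S.equivFin ⟨j, hj⟩, by simp⟩

theorem continuous_ofFinset {ι Z : Type*} [TopologicalSpace Z] (S : Finset ι) {y : Z → ι → Y}
    (hy : ∀ z, InjOn (y z) S) (hcont : ∀ i, Continuous fun z => y z i) :
    Continuous fun z => ofFinset S (y z) (hy z) :=
  continuous_quotient_mk'.comp <|
    (continuous_pi fun i => hcont (S.equivFin.symm i)).subtype_mk _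

end UnordConf

theorem IsSigmaClass.apply_mem_iff {π : Type*} [Group π] {n : ℕ} {σ : π →* Equiv.Perm (Fin n)}
    {S : Set (Fin n)} (hS : IsSigmaClass σ S) (γ : π) (i : Fin n) : σ γ i ∈ S ↔ i ∈ S := by
  obtain ⟨j, rfl⟩ := hS
  constructor
  · rintro ⟨δ, hδ⟩
    exact ⟨γ⁻¹ * δ, by simp [hδ]⟩
  · rintro ⟨δ, rfl⟩
    exact ⟨γ * δ, by rw [map_mul, Equiv.Perm.mul_apply]⟩

theorem NVLift.image_smul_eq {π Xt X : Type*} [Group π] [TopologicalSpace Xt]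
    [TopologicalSpace X] [MulAction π Xt] {p : Xt → X} (hp : ∀ (γ : π) (x : Xt), p (γ • x) = p x)
    {n : ℕ} {f : NValuedMap X X n} (L : NVLift (π := π) p f) {S : Set (Fin n)}
    (hS : IsSigmaClass L.sigma S) (γ : π) (x : Xt) :
    (fun i => p (L.fbar i (γ • x))) '' S = (fun i => p (L.fbar i x)) '' S := by
  have hfbar : (fun i => p (L.fbar i (γ • x))) = (fun i => p (L.fbar i x)) ∘ ⇑(L.sigma γ)⁻¹ := by
    funext i
    simp only [comp_apply, L.equivar, hp]
  have hperm : ⇑(L.sigma γ) ⁻¹' S = S := Set.ext (hS.apply_mem_iff γ)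
  rw [hfbar, image_comp, Equiv.Perm.coe_inv, Equiv.image_symm_eq_preimage, hperm]

theorem statement_5_general {π Xt X : Type*} [Group π] [TopologicalSpace Xt] [TopologicalSpace X]
    [MulAction π Xt] [ConnectedSpace X]
    {p : Xt → X} (hp : DeckSetup π Xt X p)
    {n : ℕ} {f : NValuedMap X X n} (L : NVLift (π := π) p f)
    (S : Finset (Fin n)) (hS : IsSigmaClass L.sigma ↑S) :
    ∃ g : NValuedMap X X S.card, IsSubmap g f ∧
      ∀ x : Xt, UnordConf.values (g (p x)) = {y : X | ∃ i ∈ S, y = p (L.fbar i x)} := by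
  have : SimplyConnectedSpace Xt := hp.simplyConnected
  have hsurj : Surjective p := hp.covering.surjective
  let G : C(Xt, UnordConf S.card X) :=
    ⟨fun x => UnordConf.ofFinset S (fun i => p (L.fbar i x)) (L.inj x).injOn,
      UnordConf.continuous_ofFinset S _ fun i => hp.continuous_p.comp (L.continuous_fbar i)⟩
  let P : C(Xt, X) := ⟨p, hp.continuous_p⟩
  have hP : Topology.IsQuotientMap P := hp.covering.isQuotientMap hsurj
  have hG : FactorsThrough G P := by
    intro x y hxy
    obtain ⟨γ, rfl⟩ := hp.exists_deck x y hxy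
    refine UnordConf.values_injective ?_
    simp only [G, ContinuousMap.coe_mk, UnordConf.values_ofFinset]
    exact (L.image_smul_eq hp.p_smul hS γ x).symm
  let g := hP.lift G hG
  have hgp : ∀ x, g (p x) = G x := ContinuousMap.congr_fun (hP.lift_comp G hG)
  have hvalues : ∀ x, (g (p x)).values = {y : X | ∃ i ∈ S, y = p (L.fbar i x)} := by
    intro x
    rw [hgp, ContinuousMap.coe_mk, UnordConf.values_ofFinset]
    ext y
    simp [eq_comm]
  refine ⟨g, fun b => ?_, hvalues⟩
  obtain ⟨x, rfl⟩ := hsurj b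
  rw [hvalues, L.lifts]
  rintro _ ⟨i, -, rfl⟩
  exact mem_range_self i

theorem statement_5 {π Xt X : Type*} [Group π] [TopologicalSpace Xt] [TopologicalSpace X]
    [MulAction π Xt] [ConnectedSpace X] (hX : IsFinitePolyhedron X)
    {p : Xt → X} (hp : DeckSetup π Xt X p)
    {n : ℕ} {f : NValuedMap X X n} (L : NVLift (π := π) p f)
    (S : Finset (Fin n)) (hS : IsSigmaClass L.sigma ↑S) :
    ∃ g : NValuedMap X X S.card, IsSubmap g f ∧
      ∀ x : Xt, UnordConf.values (g (p x)) = {y : X | ∃ i ∈ S, y = p (L.fbar i x)} :=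
  statement_5_general hp L S hS
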